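/- arXiv:1902.09005 — 5 statements merged into one kernel-verified Lean document; each statement's English description precedes it below -/
import Mathlib

section
/- Let (Z_{k,n})_{k,n∈ℕ} be a family of real-valued random variables satisfying assumptions AS1 and AS2, with limiting random variables (Z_k)_{k∈ℕ}. Then the limit lim_{n→∞} ( p-liminf_{k→∞} Z_{k,n} ) exists and p-liminf_{k→∞} Z_k = lim_{n→∞} ( p-liminf_{k→∞} Z_{k,n} ). -/
open MeasureTheory Filter Topology

/-- The CDF of a real random variable `Z` under the measure `μ`, evaluated at `α`,
using the convention `F(α) = P(Z < α)`. -/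
noncomputable def cdfLt {Ω : Type*} [MeasurableSpace Ω] (μ : Measure Ω) (Z : Ω → ℝ)
    (α : ℝ) : ℝ :=
  (μ {ω | Z ω < α}).toReal

/-- The limit-inferior in probability of a sequence of real random variables:
`p-liminf_{k→∞} Z_k = sup {α ∈ ℝ | lim_{k→∞} P(Z_k < α) = 0}`. -/
noncomputable def pliminf {Ω : Type*} [MeasurableSpace Ω] (μ : Measure Ω)
    (Z : ℕ → Ω → ℝ) : ℝ :=
  sSup {α : ℝ | Tendsto (fun k => cdfLt μ (Z k) α) atTop (nhds 0)}

/-! The sets `{α | P(Z_{k,n} < α) → 0}` and `{α | P(Z_k < α) → 0}` defining the two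
p-liminf's coincide as soon as `Z_{k,n}` is uniformly `1/2`-close in distribution to `Z_k`:
by AS1 and Helly's selection theorem every cluster point of `k ↦ P(Z_{k,n} < α)` is `0` or `1`,
by uniform approximation the same holds for `k ↦ P(Z_k < α)`, and two `[0,1]`-valued sequences
whose cluster points lie in `{0, 1}` and which stay `1/2`-close tend to `0` together. Hence
`n ↦ p-liminf_k Z_{k,n}` is eventually constant, equal to `p-liminf_k Z_k`. -/

open Set

lemma cdfLt_mem_Icc {Ω : Type*} [MeasurableSpace Ω] (μ : Measure Ω) [IsProbabilityMeasure μ]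
    (W : Ω → ℝ) (α : ℝ) : cdfLt μ W α ∈ Icc (0 : ℝ) 1 :=
  ⟨ENNReal.toReal_nonneg,
    ENNReal.toReal_le_of_le_ofReal zero_le_one (by simpa using prob_le_one)⟩

lemma monotone_cdfLt {Ω : Type*} [MeasurableSpace Ω] (μ : Measure Ω) [IsFiniteMeasure μ]
    (W : Ω → ℝ) : Monotone (cdfLt μ W) := fun _ _ hab =>
  ENNReal.toReal_mono (measure_ne_top μ _) (measure_mono fun _ hω => lt_of_lt_of_le hω hab)

theorem exists_subseq_tendsto_on_countable {X : Type*} {S : Set X} (hS : S.Countable)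
    (u : ℕ → X → ℝ) (hmem : ∀ k, ∀ α ∈ S, u k α ∈ Icc (0 : ℝ) 1) :
    ∃ φ : ℕ → ℕ, StrictMono φ ∧ ∀ α ∈ S, ∃ x, Tendsto (fun l => u (φ l) α) atTop (𝓝 x) := by
  have := hS.to_subtype
  obtain ⟨a, φ, hφ, ha⟩ := SeqCompactSpace.tendsto_subseq
    fun k (α : S) => (⟨u k α, hmem k α α.2⟩ : Icc (0 : ℝ) 1)
  exact ⟨φ, hφ, fun α hα =>
    ⟨a ⟨α, hα⟩, (continuous_subtype_val.tendsto _).comp (tendsto_pi_nhds.mp ha ⟨α, hα⟩)⟩⟩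

theorem countable_not_tendsto_of_tendsto_rat (u : ℕ → ℝ → ℝ) (hmono : ∀ k, Monotone (u k))
    (hmem : ∀ k α, u k α ∈ Icc (0 : ℝ) 1)
    (hrat : ∀ q : ℚ, ∃ x, Tendsto (fun k => u k q) atTop (𝓝 x)) :
    {α | ¬∃ x, Tendsto (fun k => u k α) atTop (𝓝 x)}.Countable := by
  set L : ℝ → ℝ := fun α => liminf (fun k => u k α) atTop
  set U : ℝ → ℝ := fun α => limsup (fun k => u k α) atTop
  have hbdd_le : ∀ α, IsBoundedUnder (· ≤ ·) atTop (fun k => u k α) :=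
    fun α => isBoundedUnder_of ⟨1, fun k => (hmem k α).2⟩
  have hbdd_ge : ∀ α, IsBoundedUnder (· ≥ ·) atTop (fun k => u k α) :=
    fun α => isBoundedUnder_of ⟨0, fun k => (hmem k α).1⟩
  have hLU : ∀ α, L α ≤ U α := fun α => liminf_le_limsup (hbdd_le α) (hbdd_ge α)
  have hUL : ∀ α β, α < β → U α ≤ L β := by
    intro α β hαβ
    obtain ⟨q, hαq, hqβ⟩ := exists_rat_btwn hαβ
    obtain ⟨x, hx⟩ := hrat q
    calc U α ≤ U q := limsup_le_limsup (Eventually.of_forall fun k => hmono k hαq.le)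
          (hbdd_ge α).isCoboundedUnder_flip (hbdd_le q)
      _ = L q := hx.limsup_eq.trans hx.liminf_eq.symm
      _ ≤ L β := liminf_le_liminf (Eventually.of_forall fun k => hmono k hqβ.le)
          (hbdd_ge q) (hbdd_le β).isCoboundedUnder_flip
  have hU : Monotone U := fun α β hαβ =>
    hαβ.eq_or_lt.elim (fun h => h ▸ le_rfl) fun h => (hUL α β h).trans (hLU β)
  -- At a point of non-convergence `L α < U α`, while `U β ≤ L α` for `β < α`: `U` jumps at `α`.
  refine hU.countable_not_continuousAt.mono fun α (hα : ¬∃ x, _) (hcont : ContinuousAt U α) =>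
    hα ⟨U α, tendsto_of_liminf_eq_limsup ?_ rfl (hbdd_le α) (hbdd_ge α)⟩
  exact le_antisymm (hLU α) (le_of_tendsto (hcont.tendsto.mono_left nhdsWithin_le_nhds)
    (eventually_nhdsWithin_of_forall (s := Iio α) fun β hβ => hUL β α hβ))

/-- Helly's selection theorem. -/
theorem exists_subseq_tendsto_of_monotone (u : ℕ → ℝ → ℝ) (hmono : ∀ k, Monotone (u k))
    (hmem : ∀ k α, u k α ∈ Icc (0 : ℝ) 1) :
    ∃ φ : ℕ → ℕ, StrictMono φ ∧ ∃ G : ℝ → ℝ,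
      ∀ α, Tendsto (fun l => u (φ l) α) atTop (𝓝 (G α)) := by
  obtain ⟨φ₁, hφ₁, hrat⟩ := exists_subseq_tendsto_on_countable (countable_range ((↑) : ℚ → ℝ))
    u fun k α _ => hmem k α
  have hbad := countable_not_tendsto_of_tendsto_rat (fun l => u (φ₁ l)) (fun l => hmono _)
    (fun l => hmem _) fun q => hrat q ⟨q, rfl⟩
  obtain ⟨φ₂, hφ₂, hbad_conv⟩ := exists_subseq_tendsto_on_countable hbad (fun l => u (φ₁ l))
    fun l α _ => hmem _ α
  have hconv : ∀ α, ∃ x, Tendsto (fun l => u (φ₁ (φ₂ l)) α) atTop (𝓝 x) := by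
    intro α
    by_cases hα : ∃ x, Tendsto (fun l => u (φ₁ l) α) atTop (𝓝 x)
    · obtain ⟨x, hx⟩ := hα
      exact ⟨x, hx.comp hφ₂.tendsto_atTop⟩
    · exact hbad_conv α hα
  choose G hG using hconv
  exact ⟨φ₁ ∘ φ₂, hφ₁.comp hφ₂, G, hG⟩

theorem mapClusterPt_mem_of_forall_tendsto_subseq {T : Set ℝ} (u : ℕ → ℝ → ℝ)
    (hmono : ∀ k, Monotone (u k))
    (hmem : ∀ k α, u k α ∈ Icc (0 : ℝ) 1)
    (hT : ∀ φ : ℕ → ℕ, StrictMono φ → ∀ G : ℝ → ℝ,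
      (∀ α, Tendsto (fun l => u (φ l) α) atTop (𝓝 (G α))) → ∀ α, G α ∈ T)
    {α x : ℝ} (hx : MapClusterPt x atTop fun k => u k α) : x ∈ T := by
  obtain ⟨φ, hφ, hφx⟩ := hx.tendsto_subseq
  obtain ⟨ψ, hψ, G, hG⟩ := exists_subseq_tendsto_of_monotone (fun l => u (φ l))
    (fun l => hmono _) (fun l => hmem _)
  rw [tendsto_nhds_unique (hφx.comp hψ.tendsto_atTop) (hG α)]
  exact hT (φ ∘ ψ) (hφ.comp hψ) G hG α

theorem exists_mapClusterPt_dist_le {E : Type*} [PseudoMetricSpace E] {K : Set E}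
    (hK : IsCompact K) {a b : ℕ → E} {η : ℝ} (ha : ∀ k, a k ∈ K)
    (hab : ∀ k, dist (a k) (b k) ≤ η) {x : E} (hx : MapClusterPt x atTop b) :
    ∃ y, MapClusterPt y atTop a ∧ dist y x ≤ η := by
  obtain ⟨φ, hφ, hφx⟩ := hx.tendsto_subseq
  obtain ⟨y, -, ψ, hψ, hψy⟩ := hK.tendsto_subseq fun l => ha (φ l)
  exact ⟨y, hψy.mapClusterPt.of_comp (hφ.comp hψ).tendsto_atTop,
    le_of_tendsto' (hψy.dist (hφx.comp hψ.tendsto_atTop)) fun l => hab _⟩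

theorem mapClusterPt_mem_of_uniform_approx {E : Type*} [PseudoMetricSpace E] {K T : Set E}
    (hK : IsCompact K) (hT : IsClosed T) (a : ℕ → ℕ → E) (ha : ∀ n k, a n k ∈ K)
    (haT : ∀ n y, MapClusterPt y atTop (a n) → y ∈ T) {b : ℕ → E}
    (happrox : ∀ η > 0, ∃ n, ∀ k, dist (a n k) (b k) ≤ η) {x : E}
    (hx : MapClusterPt x atTop b) : x ∈ T := by
  rw [← hT.closure_eq, Metric.mem_closure_iff]
  intro ε hε
  obtain ⟨n, hn⟩ := happrox (ε / 2) (half_pos hε)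
  obtain ⟨y, hy, hyx⟩ := exists_mapClusterPt_dist_le hK (ha n) hn hx
  exact ⟨y, haT n y hy, by rw [dist_comm]; linarith⟩

theorem tendsto_zero_of_dist_le {a b : ℕ → ℝ} {η : ℝ} (ha : Tendsto a atTop (𝓝 0))
    (hb : ∀ k, b k ∈ Icc (0 : ℝ) 1) (hb01 : ∀ x, MapClusterPt x atTop b → x ∈ ({0, 1} : Set ℝ))
    (hab : ∀ k, dist (a k) (b k) ≤ η) (hη : η < 1) : Tendsto b atTop (𝓝 0) := by
  refine isCompact_Icc.tendsto_nhds_of_unique_mapClusterPt (Eventually.of_forall hb)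
    fun x _ hx => ?_
  obtain ⟨φ, hφ, hφx⟩ := hx.tendsto_subseq
  have hx_le : dist 0 x ≤ η :=
    le_of_tendsto' ((ha.comp hφ.tendsto_atTop).dist hφx) fun l => hab _
  rcases hb01 x hx with rfl | rfl
  · rfl
  · norm_num at hx_le
    linarith

/-- If the family `(Z_{k,n})` satisfies AS1 (for every fixed `n`, every
convergent subsequence of `(Z_{k,n})_k` converges in distribution, as `k → ∞`, to a finite
deterministic scalar, i.e. its limiting CDF is a unit step at some `c ∈ ℝ`) and AS2 (for every
fixed `k`, `Z_{k,n}` converges in distribution as `n → ∞` to `Z_k`, uniformly in `k` and in the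
evaluation point), then `lim_{n→∞} (p-liminf_{k→∞} Z_{k,n})` exists and equals
`p-liminf_{k→∞} Z_k`. -/
theorem stmt0 {Ω : Type*} [MeasurableSpace Ω] (μ : Measure Ω) [IsProbabilityMeasure μ]
    (Z : ℕ → ℕ → Ω → ℝ) (Zlim : ℕ → Ω → ℝ)
    (hAS1 : ∀ n : ℕ, ∀ φ : ℕ → ℕ, StrictMono φ → ∀ G : ℝ → ℝ,
      (∀ α : ℝ, Tendsto (fun l => cdfLt μ (Z (φ l) n) α) atTop (nhds (G α))) →
      ∃ c : ℝ, ∀ α : ℝ, G α = if α ≤ c then 0 else 1)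
    (hAS2 : ∀ η : ℝ, 0 < η → ∃ n₀ : ℕ, ∀ n > n₀, ∀ k : ℕ, ∀ α : ℝ,
      |cdfLt μ (Z k n) α - cdfLt μ (Zlim k) α| < η) :
    Tendsto (fun n => pliminf μ (fun k => Z k n)) atTop (nhds (pliminf μ Zlim)) := by
  have hstep : ∀ n α x, MapClusterPt x atTop (fun k => cdfLt μ (Z k n) α) →
      x ∈ ({0, 1} : Set ℝ) := fun n α x =>
    mapClusterPt_mem_of_forall_tendsto_subseq (fun k => cdfLt μ (Z k n))
      (fun k => monotone_cdfLt μ _) (fun k => cdfLt_mem_Icc μ _) fun φ hφ G hG β => by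
        obtain ⟨c, hc⟩ := hAS1 n φ hφ G hG
        rw [hc]
        split_ifs <;> simp
  have hstep_lim : ∀ α x, MapClusterPt x atTop (fun k => cdfLt μ (Zlim k) α) →
      x ∈ ({0, 1} : Set ℝ) := fun α x =>
    mapClusterPt_mem_of_uniform_approx isCompact_Icc (toFinite _).isClosed
      (fun n k => cdfLt μ (Z k n) α) (fun n k => cdfLt_mem_Icc μ _ α) (fun n => hstep n α)
      fun η hη => by
        obtain ⟨n₀, hn₀⟩ := hAS2 η hη
        exact ⟨n₀ + 1, fun k => (hn₀ _ n₀.lt_succ_self k α).le⟩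
  obtain ⟨n₀, hn₀⟩ := hAS2 (1 / 2) (by norm_num)
  refine tendsto_const_nhds.congr' (eventually_atTop.mpr ⟨n₀ + 1, fun n hn => ?_⟩)
  unfold pliminf
  congr 1
  ext α
  have hclose : ∀ k, dist (cdfLt μ (Z k n) α) (cdfLt μ (Zlim k) α) ≤ 1 / 2 :=
    fun k => (hn₀ n hn k α).le
  exact ⟨fun h => tendsto_zero_of_dist_le h (fun k => cdfLt_mem_Icc μ _ α) (hstep n α)
      (fun k => (dist_comm _ _).trans_le (hclose k)) (by norm_num),
    fun h => tendsto_zero_of_dist_le h (fun k => cdfLt_mem_Icc μ _ α) (hstep_lim α) hclose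
      (by norm_num)⟩
end

section
/- Let N ∈ ℕ, let σ²[0], …, σ²[N−1] be strictly positive reals, and let P > 0. Then there exists a unique Δ > 0 satisfying the water-filling equation (1/N)·Σ_{i=0}^{N−1} (Δ − σ²[i])^+ = P. -/
/-!
The total allocation `Δ ↦ ∑ᵢ (Δ - σ²[i])⁺` is continuous, vanishes at `Δ = 0` since every
`σ²[i] > 0`, and grows at least like `Δ - σ²[i]`, so by the intermediate value theorem it attains
the value `N · P`. Where it is positive, some `σ²[i]` lies below `Δ` (so `Δ > 0`) and the term
`(Δ - σ²[i])⁺` is strictly increasing; hence the allocation is strictly increasing there and the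
level `Δ` is unique.
-/

open Finset

namespace WaterFilling

variable {ι : Type*} (s : Finset ι) (σ : ι → ℝ)

def totalPower (Δ : ℝ) : ℝ := ∑ i ∈ s, max (Δ - σ i) 0

theorem continuous_totalPower : Continuous (totalPower s σ) :=
  continuous_finsetSum _ fun _ _ => (continuous_id.sub continuous_const).max continuous_const

variable {s σ}

theorem totalPower_eq_zero {Δ : ℝ} (h : ∀ i ∈ s, Δ ≤ σ i) : totalPower s σ Δ = 0 :=
  sum_eq_zero fun i hi => max_eq_right (sub_nonpos.mpr (h i hi))

theorem sub_le_totalPower {i : ι} (hi : i ∈ s) (Δ : ℝ) : Δ - σ i ≤ totalPower s σ Δ :=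
  (le_max_left _ _).trans <|
    single_le_sum (f := fun j => max (Δ - σ j) 0) (fun _ _ => le_max_right _ _) hi

theorem exists_lt_of_totalPower_pos {Δ : ℝ} (h : 0 < totalPower s σ Δ) : ∃ i ∈ s, σ i < Δ := by
  by_contra! hle
  exact h.ne' (totalPower_eq_zero hle)

theorem totalPower_lt_of_pos {x y : ℝ} (hx : 0 < totalPower s σ x) (hxy : x < y) :
    totalPower s σ x < totalPower s σ y := by
  obtain ⟨i, hi, hσx⟩ := exists_lt_of_totalPower_pos hx
  refine sum_lt_sum (fun j _ => max_le_max_right 0 (by linarith)) ⟨i, hi, ?_⟩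
  rw [max_eq_left (by linarith), max_eq_left (by linarith)]
  linarith

theorem eq_of_totalPower_eq {x y : ℝ} (hx : 0 < totalPower s σ x)
    (hxy : totalPower s σ x = totalPower s σ y) : x = y := by
  by_contra hne
  rcases lt_or_gt_of_ne hne with hlt | hlt
  · exact (totalPower_lt_of_pos hx hlt).ne hxy
  · exact (totalPower_lt_of_pos (hxy ▸ hx) hlt).ne' hxy

theorem exists_totalPower_eq (hs : s.Nonempty) {a c : ℝ} (ha : totalPower s σ a ≤ c) :
    ∃ Δ, totalPower s σ Δ = c := by
  obtain ⟨i, hi⟩ := hs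
  set b := max a (σ i + c)
  have hb : c ≤ totalPower s σ b := by
    linarith [sub_le_totalPower (σ := σ) hi b, le_max_right a (σ i + c)]
  obtain ⟨Δ, -, hΔc⟩ := intermediate_value_Icc (le_max_left a (σ i + c))
    (continuous_totalPower s σ).continuousOn ⟨ha, hb⟩
  exact ⟨Δ, hΔc⟩

end WaterFilling

open WaterFilling in
/-- For strictly positive noise variances `σ²[0], …, σ²[N−1]` and `P > 0`,
there exists a unique `Δ > 0` satisfying the water-filling equation
`(1/N) ∑_{i<N} (Δ − σ²[i])⁺ = P`. -/
theorem stmt6 (N : ℕ) (hN : 0 < N) (σ2 : ℕ → ℝ)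
    (hσ2 : ∀ i < N, 0 < σ2 i) (P : ℝ) (hP : 0 < P) :
    ∃! Δ : ℝ, 0 < Δ ∧ (1 / (N : ℝ)) * ∑ i ∈ Finset.range N, max (Δ - σ2 i) 0 = P := by
  have hN' : (0 : ℝ) < N := Nat.cast_pos.mpr hN
  have hequation (Δ : ℝ) : (1 / (N : ℝ)) * ∑ i ∈ range N, max (Δ - σ2 i) 0 = P ↔
      totalPower (range N) σ2 Δ = N * P := by
    rw [totalPower, one_div_mul_eq_div, div_eq_iff hN'.ne', mul_comm]
  have hNP : 0 < (N : ℝ) * P := mul_pos hN' hP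
  have hzero : totalPower (range N) σ2 0 = 0 :=
    totalPower_eq_zero fun i hi => (hσ2 i (mem_range.mp hi)).le
  obtain ⟨Δ, hΔ⟩ :=
    exists_totalPower_eq (nonempty_range_iff.mpr hN.ne') (hzero.trans_le hNP.le)
  obtain ⟨i, hi, hσΔ⟩ := exists_lt_of_totalPower_pos (hΔ ▸ hNP)
  refine ⟨Δ, ⟨(hσ2 i (mem_range.mp hi)).trans hσΔ, (hequation Δ).mpr hΔ⟩, ?_⟩
  rintro y ⟨-, hy⟩
  exact (eq_of_totalPower_eq (hΔ ▸ hNP) (hΔ.trans ((hequation y).mp hy).symm)).symm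
end

section
/- Assume in addition that 1/(2π) < C(t) < ∞ for all t ∈ ℝ. For irrational ε ∈ (0,1) set ε_n = ⌊n·ε⌋/n, σ_n²[i] = C(i·T_c/(p+ε_n)), and σ_ε²[i] = C(i·T_c/(p+ε)). For k ∈ ℕ and w ∈ ℝ^k let f_{k,n}(w) = Π_{i=1}^{k} (2π·σ_n²[i])^{−1/2}·exp(−w_i²/(2σ_n²[i])) be the density of the Gaussian vector W_n^{(k)} with independent entries, and f_k(w) the analogous density of W_ε^{(k)}. Then f_{k,n} converges to f_k as n→∞ uniformly in w ∈ ℝ^k and in k ∈ ℕ: for every η > 0 there exists n_0(η) such that |f_{k,n}(w) − f_k(w)| < η for all n > n_0(η), all k ∈ ℕ, and all w ∈ ℝ^k. -/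
/-!
A continuous periodic `C` attains its minimum `m`, and `2πm > 1`, so every factor of the product
densities lies in `[0, q]` with `q = (2πm)^{-1/2} < 1`. Beyond a dimension `K` with `q^K < η`
both densities are below `η`, whatever `n` and `w` are. Below `K` all factors lie in `[0, 1]`,
so the difference of the products is at most the sum of the differences of the factors; and
`v ↦ gpdf v x` is Lipschitz on `[m, ∞)` uniformly in `x`. Since `ε_n → ε` and `C` is continuous,
the finitely many variances `σ_n²[i]`, `i ≤ K`, converge, which finishes the proof.
-/

open MeasureTheory Filter Topology

/-- The scalar zero-mean Gaussian density with variance `v`: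
`(2πv)^{−1/2}·exp(−x²/(2v))`. -/
noncomputable def gpdf (v x : ℝ) : ℝ :=
  (Real.sqrt (2 * Real.pi * v))⁻¹ * Real.exp (-(x ^ 2) / (2 * v))

/-- The density of the `k`-dimensional zero-mean Gaussian vector with independent entries of
variances `σ2 1, …, σ2 k`, evaluated at `w ∈ ℝ^k`. -/
noncomputable def gaussVecPdf (σ2 : ℕ → ℝ) (k : ℕ) (w : Fin k → ℝ) : ℝ :=
  ∏ i : Fin k, gpdf (σ2 ((i : ℕ) + 1)) (w i)

open Real

lemma abs_mul_sub_mul_le {a b c d : ℝ} (hb : |b| ≤ 1) (hc : |c| ≤ 1) :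
    |a * b - c * d| ≤ |a - c| + |b - d| := by
  calc |a * b - c * d| = |(a - c) * b + c * (b - d)| := by ring_nf
    _ ≤ |a - c| * |b| + |c| * |b - d| := by
        rw [← abs_mul, ← abs_mul]; exact abs_add_le _ _
    _ ≤ |a - c| * 1 + 1 * |b - d| := by gcongr
    _ = |a - c| + |b - d| := by ring

lemma Finset.abs_prod_sub_prod_le {ι : Type*} (s : Finset ι) {f g : ι → ℝ}
    (hf : ∀ i ∈ s, |f i| ≤ 1) (hg : ∀ i ∈ s, |g i| ≤ 1) :
    |∏ i ∈ s, f i - ∏ i ∈ s, g i| ≤ ∑ i ∈ s, |f i - g i| := by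
  induction s using Finset.cons_induction with
  | empty => simp
  | cons a s _ ih =>
    simp only [Finset.forall_mem_cons] at hf hg
    rw [Finset.prod_cons, Finset.prod_cons, Finset.sum_cons]
    have hprod : |∏ i ∈ s, f i| ≤ 1 := by
      rw [Finset.abs_prod]; exact Finset.prod_le_one (fun _ _ => abs_nonneg _) hf.2
    calc _ ≤ |f a - g a| + |∏ i ∈ s, f i - ∏ i ∈ s, g i| := abs_mul_sub_mul_le hprod hg.1
      _ ≤ _ := by grw [ih hf.2 hg.2]

lemma abs_inv_sqrt_sub_inv_sqrt_le {a b : ℝ} (ha : 1 ≤ a) (hb : 1 ≤ b) :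
    |(√a)⁻¹ - (√b)⁻¹| ≤ |a - b| / 2 := by
  have hsa : 1 ≤ √a := one_le_sqrt.mpr ha
  have hsb : 1 ≤ √b := one_le_sqrt.mpr hb
  have hden : 2 ≤ (√a + √b) * (√a * √b) := by nlinarith [one_le_mul_of_one_le_of_one_le hsa hsb]
  have key : (√a)⁻¹ - (√b)⁻¹ = (b - a) / ((√a + √b) * (√a * √b)) := by
    field_simp
    linear_combination Real.sq_sqrt (by linarith : 0 ≤ b) - Real.sq_sqrt (by linarith : 0 ≤ a)
  rw [key, abs_div, abs_of_pos (by linarith : 0 < (√a + √b) * (√a * √b)), abs_sub_comm]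
  exact div_le_div_of_nonneg_left (abs_nonneg _) two_pos hden

lemma abs_exp_neg_div_sub_le {m v v' u : ℝ} (hm : 0 < m) (hv : m ≤ v) (hv' : m ≤ v')
    (hu : 0 ≤ u) : |exp (-u / v) - exp (-u / v')| ≤ |v - v'| / m := by
  wlog hvv' : v ≤ v' generalizing v v'
  · rw [abs_sub_comm, abs_sub_comm v]; exact this hv' hv (le_of_not_ge hvv')
  have hv0 : 0 < v := hm.trans_le hv
  have hv'0 : 0 < v' := hm.trans_le hv'
  set s := u / v' with hs
  -- `e^{-s} - e^{-u/v} ≤ e^{-s} (u/v - s)`, and `s e^{-s} ≤ 1` absorbs the factor `s` in `u/v - s`.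
  have hts : u / v - s = s * ((v' - v) / v) := by
    rw [hs]; field_simp
  have hgap : exp (-s) - exp (-(u / v)) ≤ exp (-s) * (u / v - s) := by
    have h := one_sub_le_exp_neg (u / v - s)
    have hsplit : exp (-(u / v)) = exp (-s) * exp (-(u / v - s)) := by
      rw [← exp_add]; ring_nf
    rw [hsplit]; nlinarith [exp_pos (-s)]
  have hdecay : s * exp (-s) ≤ 1 :=
    (mul_exp_neg_le_exp_neg_one s).trans (by simp)
  have hmono : exp (-(u / v)) ≤ exp (-s) := by
    gcongr; exact div_le_div_of_nonneg_left hu hv0 hvv'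
  rw [neg_div, neg_div, abs_sub_comm, abs_of_nonneg (by linarith), abs_sub_comm,
    abs_of_nonneg (by linarith)]
  calc exp (-s) - exp (-(u / v)) ≤ (s * exp (-s)) * ((v' - v) / v) := by
        rw [hts] at hgap; linarith
    _ ≤ 1 * ((v' - v) / m) := by gcongr
    _ = (v' - v) / m := one_mul _

lemma gpdf_nonneg (v x : ℝ) : 0 ≤ gpdf v x := by
  unfold gpdf; positivity

lemma exp_neg_sq_div_le_one {v : ℝ} (hv : 0 ≤ v) (x : ℝ) : exp (-(x ^ 2) / (2 * v)) ≤ 1 :=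
  exp_le_one_iff.mpr (div_nonpos_of_nonpos_of_nonneg (neg_nonpos.mpr (sq_nonneg x)) (by positivity))

lemma gpdf_le_inv_sqrt {v : ℝ} (hv : 0 ≤ v) (x : ℝ) : gpdf v x ≤ (√(2 * π * v))⁻¹ :=
  mul_le_of_le_one_right (by positivity) (exp_neg_sq_div_le_one hv x)

lemma gpdf_le_inv_sqrt_of_le {m v : ℝ} (hm : 0 < m) (hmv : m ≤ v) (x : ℝ) :
    gpdf v x ≤ (√(2 * π * m))⁻¹ :=
  (gpdf_le_inv_sqrt (hm.le.trans hmv) x).trans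
    (inv_anti₀ (sqrt_pos.mpr (by positivity)) (sqrt_le_sqrt (by gcongr)))

lemma inv_sqrt_le_one {a : ℝ} (ha : 1 ≤ a) : (√a)⁻¹ ≤ 1 :=
  inv_le_one_of_one_le₀ (one_le_sqrt.mpr ha)

lemma abs_gpdf_le_one {v : ℝ} (hv : 1 ≤ 2 * π * v) (x : ℝ) : |gpdf v x| ≤ 1 := by
  have hv0 : 0 < v := pos_of_mul_pos_right (a := 2 * π) (by linarith) (by positivity)
  rw [abs_of_nonneg (gpdf_nonneg v x)]
  exact (gpdf_le_inv_sqrt hv0.le x).trans (inv_sqrt_le_one hv)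

lemma abs_gpdf_sub_gpdf_le {m v v' : ℝ} (hm : 1 ≤ 2 * π * m) (hv : m ≤ v) (hv' : m ≤ v')
    (x : ℝ) : |gpdf v x - gpdf v' x| ≤ (π + 1 / m) * |v - v'| := by
  have hm0 : 0 < m := pos_of_mul_pos_right (a := 2 * π) (by linarith) (by positivity)
  have h2πv : 1 ≤ 2 * π * v := hm.trans (by gcongr)
  have h2πv' : 1 ≤ 2 * π * v' := hm.trans (by gcongr)
  have hA : |(√(2 * π * v'))⁻¹| ≤ 1 := by
    rw [abs_of_nonneg (by positivity)]; exact inv_sqrt_le_one h2πv'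
  have hE : |exp (-(x ^ 2) / (2 * v))| ≤ 1 := by
    rw [abs_of_pos (exp_pos _)]; exact exp_neg_sq_div_le_one (hm0.le.trans hv) x
  have hAdiff := abs_inv_sqrt_sub_inv_sqrt_le h2πv h2πv'
  have hEdiff : |exp (-(x ^ 2) / (2 * v)) - exp (-(x ^ 2) / (2 * v'))| ≤ |v - v'| / m := by
    have hsplit (w : ℝ) : -(x ^ 2) / (2 * w) = -(x ^ 2 / 2) / w := by ring
    rw [hsplit, hsplit]
    exact abs_exp_neg_div_sub_le hm0 hv hv' (by positivity)
  have hscale : |2 * π * v - 2 * π * v'| / 2 = π * |v - v'| := by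
    rw [← mul_sub, abs_mul, abs_of_pos (by positivity)]; ring
  calc |gpdf v x - gpdf v' x|
      ≤ |(√(2 * π * v))⁻¹ - (√(2 * π * v'))⁻¹|
        + |exp (-(x ^ 2) / (2 * v)) - exp (-(x ^ 2) / (2 * v'))| := abs_mul_sub_mul_le hE hA
    _ ≤ π * |v - v'| + |v - v'| / m := by rw [← hscale]; exact add_le_add hAdiff hEdiff
    _ = (π + 1 / m) * |v - v'| := by ring

lemma gaussVecPdf_nonneg (σ2 : ℕ → ℝ) (k : ℕ) (w : Fin k → ℝ) : 0 ≤ gaussVecPdf σ2 k w :=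
  Finset.prod_nonneg fun _ _ => gpdf_nonneg _ _

lemma gaussVecPdf_le_pow {m : ℝ} (hm : 0 < m) {σ2 : ℕ → ℝ} (hσ2 : ∀ i, m ≤ σ2 i) (k : ℕ)
    (w : Fin k → ℝ) : gaussVecPdf σ2 k w ≤ (√(2 * π * m))⁻¹ ^ k := by
  calc gaussVecPdf σ2 k w ≤ ∏ _i : Fin k, (√(2 * π * m))⁻¹ :=
        Finset.prod_le_prod (fun _ _ => gpdf_nonneg _ _)
          fun _ _ => gpdf_le_inv_sqrt_of_le hm (hσ2 _) _
    _ = (√(2 * π * m))⁻¹ ^ k := by simp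

lemma abs_gaussVecPdf_sub_le {m : ℝ} (hm : 1 ≤ 2 * π * m) {σ2 τ2 : ℕ → ℝ}
    (hσ2 : ∀ i, m ≤ σ2 i) (hτ2 : ∀ i, m ≤ τ2 i) (k : ℕ) (w : Fin k → ℝ) :
    |gaussVecPdf σ2 k w - gaussVecPdf τ2 k w| ≤
      (π + 1 / m) * ∑ i : Fin k, |σ2 ((i : ℕ) + 1) - τ2 ((i : ℕ) + 1)| := by
  have hle_one {ρ2 : ℕ → ℝ} (hρ2 : ∀ i, m ≤ ρ2 i) (i : ℕ) : 1 ≤ 2 * π * ρ2 i :=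
    hm.trans (by gcongr; exact hρ2 i)
  rw [Finset.mul_sum]
  exact (Finset.abs_prod_sub_prod_le _ (fun _ _ => abs_gpdf_le_one (hle_one hσ2 _) _)
    fun _ _ => abs_gpdf_le_one (hle_one hτ2 _) _).trans
      (Finset.sum_le_sum fun _ _ => abs_gpdf_sub_gpdf_le hm (hσ2 _) (hτ2 _) _)

theorem tendstoUniformly_gaussVecPdf {α : Type*} {l : Filter α} {m : ℝ} (hm : 1 < 2 * π * m)
    {σ2s : α → ℕ → ℝ} {σ2 : ℕ → ℝ} (hσ2s : ∀ a i, m ≤ σ2s a i) (hσ2 : ∀ i, m ≤ σ2 i)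
    (hlim : ∀ i, Tendsto (fun a => σ2s a i) l (𝓝 (σ2 i))) :
    TendstoUniformly (fun a (kw : Σ k, Fin k → ℝ) => gaussVecPdf (σ2s a) kw.1 kw.2)
      (fun kw => gaussVecPdf σ2 kw.1 kw.2) l := by
  have hm0 : 0 < m := pos_of_mul_pos_right (a := 2 * π) (by linarith) (by positivity)
  set q := (√(2 * π * m))⁻¹
  have hq1 : q < 1 := inv_lt_one_of_one_lt₀ (lt_sqrt zero_le_one |>.mpr (by simpa using hm))
  set L := π + 1 / m
  have hL : 0 < L := by positivity
  rw [Metric.tendstoUniformly_iff]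
  intro η hη
  obtain ⟨K, hK⟩ := exists_pow_lt_of_lt_one hη hq1
  set δ := η / (L * (K + 1))
  have hδ : 0 < δ := by positivity
  have hclose : ∀ᶠ a in l, ∀ i ∈ Finset.range K, |σ2 i - σ2s a i| < δ :=
    (eventually_all_finset _).mpr fun i _ => by
      simpa [Real.dist_eq, abs_sub_comm] using Metric.tendsto_nhds.mp (hlim i) δ hδ
  filter_upwards [hclose] with a ha ⟨k, w⟩
  rw [Real.dist_eq]
  rcases le_or_gt K k with hKk | hkK
  · have hqk : q ^ k ≤ q ^ K := pow_le_pow_of_le_one (by positivity) hq1.le hKk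
    refine lt_of_le_of_lt (abs_sub_le_of_nonneg_of_le (gaussVecPdf_nonneg _ _ _) ?_
      (gaussVecPdf_nonneg _ _ _) ?_) hK
    · exact (gaussVecPdf_le_pow hm0 hσ2 k w).trans hqk
    · exact (gaussVecPdf_le_pow hm0 (hσ2s a) k w).trans hqk
  · have hsum : ∑ i : Fin k, |σ2 ((i : ℕ) + 1) - σ2s a ((i : ℕ) + 1)| ≤ k * δ := by
      calc _ ≤ ∑ _i : Fin k, δ :=
            Finset.sum_le_sum fun i _ => (ha _ (Finset.mem_range.mpr (by omega))).le
        _ = k * δ := by simp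
    calc |gaussVecPdf σ2 k w - gaussVecPdf (σ2s a) k w|
        ≤ L * (k * δ) := (abs_gaussVecPdf_sub_le hm.le hσ2 (hσ2s a) k w).trans (by gcongr)
      _ < L * ((K + 1) * δ) := by gcongr; exact_mod_cast hkK.trans (Nat.lt_succ_self K)
      _ = η := by rw [← mul_assoc]; exact mul_div_cancel₀ η (by positivity)

lemma tendsto_floor_natCast_mul_div {ε : ℝ} (hε : 0 ≤ ε) :
    Tendsto (fun n : ℕ => (⌊(n : ℝ) * ε⌋ : ℝ) / n) atTop (𝓝 ε) := by
  refine ((tendsto_nat_floor_mul_div_atTop hε).comp tendsto_natCast_atTop_atTop).congr fun n => ?_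
  simp [mul_comm ε, natCast_floor_eq_intCast_floor (by positivity : 0 ≤ (n : ℝ) * ε)]

theorem stmt9_general (C : ℝ → ℝ) (T_c : ℝ) (hT : 0 < T_c)
    (hC_cont : Continuous C)
    (hC_per : ∀ t, C (t + T_c) = C t)
    (hC_lo : ∀ t, 1 / (2 * Real.pi) < C t)
    (p : ℕ) (ε : ℝ) (hε0 : 0 < ε) :
    ∀ η > (0 : ℝ), ∃ n₀ : ℕ, ∀ n > n₀, ∀ (k : ℕ) (w : Fin k → ℝ),
      |gaussVecPdf (fun i : ℕ =>
          C ((i : ℝ) * T_c / ((p : ℝ) + (⌊(n : ℝ) * ε⌋ : ℝ) / (n : ℝ)))) k w -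
        gaussVecPdf (fun i : ℕ => C ((i : ℝ) * T_c / ((p : ℝ) + ε))) k w| < η := by
  obtain ⟨_, ⟨t₀, rfl⟩, hmin⟩ := (Function.Periodic.compact_of_continuous hC_per hT.ne'
    hC_cont).exists_isLeast (Set.range_nonempty C)
  have hm : 1 < 2 * π * C t₀ := by
    have := hC_lo t₀; rw [div_lt_iff₀ (by positivity)] at this; linarith
  have hlim (i : ℕ) : Tendsto (fun n : ℕ => C (i * T_c / (p + ⌊(n : ℝ) * ε⌋ / n))) atTop
      (𝓝 (C (i * T_c / (p + ε)))) :=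
    (hC_cont.tendsto _).comp <| tendsto_const_nhds.div
      (tendsto_const_nhds.add (tendsto_floor_natCast_mul_div hε0.le)) (by positivity)
  intro η hη
  obtain ⟨n₀, hn₀⟩ := eventually_atTop.mp <| Metric.tendstoUniformly_iff.mp
    (tendstoUniformly_gaussVecPdf hm (fun _ _ => hmin ⟨_, rfl⟩) (fun _ => hmin ⟨_, rfl⟩) hlim) η hη
  exact ⟨n₀, fun n hn k w => by simpa [Real.dist_eq, abs_sub_comm] using hn₀ n hn.le ⟨k, w⟩⟩

/-- Assume `1/(2π) < C(t)` for all `t` (in addition to continuity, strict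
positivity and `T_c`-periodicity of `C`).  For irrational `ε ∈ (0,1)` put `ε_n = ⌊n·ε⌋/n`,
`σ_n²[i] = C(i·T_c/(p+ε_n))` and `σ_ε²[i] = C(i·T_c/(p+ε))`.  Then the densities
`f_{k,n}(w) = ∏_{i=1}^{k} (2π σ_n²[i])^{−1/2} exp(−w_i²/(2σ_n²[i]))` of `W_n^{(k)}` converge to
the densities `f_k` of `W_ε^{(k)}` as `n → ∞`, uniformly in `w ∈ ℝ^k` and in `k ∈ ℕ`. -/
theorem stmt9 (C : ℝ → ℝ) (T_c : ℝ) (hT : 0 < T_c)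
    (hC_cont : Continuous C) (hC_pos : ∀ t, 0 < C t)
    (hC_per : ∀ t, C (t + T_c) = C t)
    (hC_lo : ∀ t, 1 / (2 * Real.pi) < C t)
    (p : ℕ) (hp : 0 < p) (ε : ℝ) (hε0 : 0 < ε) (hε1 : ε < 1) (hirr : Irrational ε) :
    ∀ η > (0 : ℝ), ∃ n₀ : ℕ, ∀ n > n₀, ∀ (k : ℕ) (w : Fin k → ℝ),
      |gaussVecPdf (fun i : ℕ =>
          C ((i : ℝ) * T_c / ((p : ℝ) + (⌊(n : ℝ) * ε⌋ : ℝ) / (n : ℝ)))) k w -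
        gaussVecPdf (fun i : ℕ => C ((i : ℝ) * T_c / ((p : ℝ) + ε))) k w| < η :=
  stmt9_general C T_c hT hC_cont hC_per hC_lo p ε hε0
end

section
/- Fix n ∈ ℕ and let F*_{X_n} be the capacity-achieving input distribution of the memoryless channel Y_n[i] = X[i] + W_n[i] with additive wide-sense cyclostationary Gaussian noise W_n[i] (of period N_n) under the average power constraint P. Then every subsequence (in the blocklength k) of the mutual information density rates Z'_{k,n}(F*_{X_n}) = (1/k)·log( p_{Y_n^{(k)}|X_n^{(k)}}(Y_n^{(k)}|X_n^{(k)}) / p_{Y_n^{(k)}}(Y_n^{(k)}) ) converges in distribution as k→∞ to a finite deterministic scalar. -/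
open MeasureTheory ProbabilityTheory Filter Topology
open scoped NNReal ENNReal

/-- The mutual information density rate
`Z'_k = (1/k) log₂ ( p_{Y^{(k)}|X^{(k)}}(y|x) / p_{Y^{(k)}}(y) )` of the memoryless additive
Gaussian noise channel with a memoryless zero-mean Gaussian input, evaluated at the input
block `x` and the noise block `w` (so `y = x + w`): the input has variances `sX`, the noise has
variances `sW`, and hence `Y[i]` has variance `sX i + sW i`. -/
noncomputable def infoDensRate (sX sW : ℕ → ℝ) (k : ℕ) (x w : Fin k → ℝ) : ℝ :=
  (1 / (k : ℝ)) * ∑ i : Fin k,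
    Real.logb 2 (gpdf (sW ((i : ℕ) + 1)) (w i) /
      gpdf (sX ((i : ℕ) + 1) + sW ((i : ℕ) + 1)) (x i + w i))

/-- The joint law of `(X^{(k)}, W^{(k)})`: independent zero-mean Gaussian input entries with
variances `sX` and independent zero-mean Gaussian noise entries with variances `sW`. -/
noncomputable def inputNoiseMeasure (sX sW : ℕ → ℝ) (k : ℕ) :
    Measure ((Fin k → ℝ) × (Fin k → ℝ)) :=
  (Measure.pi fun i : Fin k => gaussianReal 0 (sX ((i : ℕ) + 1)).toNNReal).prod
    (Measure.pi fun i : Fin k => gaussianReal 0 (sW ((i : ℕ) + 1)).toNNReal)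

/-- The CDF of the mutual information density rate `Z'_k` (evaluated with the convention
`F(α) = P(Z'_k < α)`). -/
noncomputable def infoDensCDF (sX sW : ℕ → ℝ) (k : ℕ) (α : ℝ) : ℝ :=
  ((inputNoiseMeasure sX sW k)
    {xw | infoDensRate sX sW k xw.1 xw.2 < α}).toReal

/-!
The per-letter information densities `letterInfoDens (sX i) (sW i) (X i, W i)` are independent
and square integrable, and their means and variances are `N`-periodic in `i` because the sampled
noise variances, hence also the water-filling input variances, are. So the mean of `Z'_k`
converges in Cesàro mean to the average `c` of the letter means over one period, while Chebyshev's
inequality bounds the probability of a deviation `δ` from that mean by `B / (k δ²)`, with `B` the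
largest letter variance. Thus `Z'_k → c` in probability, which gives the convergence of the CDFs
along every subsequence.
-/

open Function

lemma memLp_two_sq_of_memLp_four {Ω : Type*} [MeasurableSpace Ω] {μ : Measure Ω} {f : Ω → ℝ}
    (hf : MemLp f 4 μ) : MemLp (fun x => f x ^ 2) 2 μ := by
  have : ENNReal.HolderTriple 4 4 2 := ⟨by
    rw [← two_mul, show (4 : ℝ≥0∞) = 2 * 2 by norm_num, ENNReal.mul_inv (by simp) (by simp),
      ← mul_assoc, ENNReal.mul_inv_cancel (by simp) (by simp), one_mul]⟩
  simpa only [sq] using hf.mul' hf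

lemma measureReal_abs_avg_sub_ge_le_pi {ι : Type*} [Fintype ι] {Ω : ι → Type*}
    [∀ i, MeasurableSpace (Ω i)] {μ : ∀ i, Measure (Ω i)} [∀ i, IsProbabilityMeasure (μ i)]
    {X : ∀ i, Ω i → ℝ} (hX : ∀ i, MemLp (X i) 2 (μ i)) {B : ℝ} (hB : ∀ i, Var[X i; μ i] ≤ B)
    {δ : ℝ} (hδ : 0 < δ) :
    (Measure.pi μ).real {ω | δ ≤ |(Fintype.card ι : ℝ)⁻¹ * ∑ i, X i (ω i)
      - (Fintype.card ι : ℝ)⁻¹ * ∑ i, ∫ x, X i x ∂μ i|} ≤ B / (Fintype.card ι * δ ^ 2) := by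
  rcases Nat.eq_zero_or_pos (Fintype.card ι) with hn | hn
  · simp [hn, not_le.2 hδ]
  set n : ℝ := (Fintype.card ι : ℝ)
  replace hn : 0 < n := Nat.cast_pos.2 hn
  set T : (∀ i, Ω i) → ℝ := ∑ i, fun ω => X i (ω i)
  have hT : MemLp T 2 (Measure.pi μ) :=
    memLp_finsetSum' _ fun i _ => (hX i).comp_measurePreserving (measurePreserving_eval μ i)
  have hET : ∫ ω, T ω ∂Measure.pi μ = ∑ i, ∫ x, X i x ∂μ i := by
    simp only [T, Finset.sum_apply]
    rw [integral_finsetSum _ fun i _ => show Integrable (fun ω : ∀ i, Ω i => X i (ω i)) _ from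
      ((hX i).comp_measurePreserving (measurePreserving_eval μ i)).integrable one_le_two]
    exact Finset.sum_congr rfl fun i _ => integral_comp_eval (hX i).aestronglyMeasurable
  have hVT : Var[T; Measure.pi μ] ≤ n * B := by
    rw [variance_sum_pi hX]
    simpa [n] using Finset.sum_le_sum fun i (_ : i ∈ Finset.univ) => hB i
  have hcheb := meas_ge_le_variance_div_sq hT (mul_pos hn hδ)
  rw [hET] at hcheb
  calc (Measure.pi μ).real _
      ≤ (Measure.pi μ).real {ω | n * δ ≤ |T ω - ∑ i, ∫ x, X i x ∂μ i|} := by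
        refine measureReal_mono fun ω hω => ?_
        simp only [Set.mem_ofPred_eq, T, Finset.sum_apply] at hω ⊢
        rwa [← mul_sub, abs_mul, abs_of_pos (inv_pos.2 hn), le_inv_mul_iff₀ hn] at hω
    _ ≤ Var[T; Measure.pi μ] / (n * δ) ^ 2 :=
        ENNReal.toReal_le_of_le_ofReal (div_nonneg (variance_nonneg _ _) (by positivity)) hcheb
    _ ≤ n * B / (n * δ) ^ 2 := by gcongr
    _ = B / (n * δ ^ 2) := by field_simp

lemma Function.Periodic.finite_range_nat {α : Type*} {f : ℕ → α} {N : ℕ}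
    (hf : Periodic f N) (hN : 0 < N) : (Set.range f).Finite :=
  ((Set.finite_Iio N).image f).subset <| by
    rintro _ ⟨j, rfl⟩
    exact ⟨j % N, Nat.mod_lt j hN, hf.map_mod_nat j⟩

lemma Function.Periodic.tendsto_avg_sum_range {f : ℕ → ℝ} {N : ℕ}
    (hf : Periodic f N) (hN : 0 < N) :
    Tendsto (fun k : ℕ => (k : ℝ)⁻¹ * ∑ j ∈ Finset.range k, f j) atTop
      (𝓝 ((N : ℝ)⁻¹ * ∑ j ∈ Finset.range N, f j)) := by
  set c := (N : ℝ)⁻¹ * ∑ j ∈ Finset.range N, f j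
  set g : ℕ → ℝ := fun k => ∑ j ∈ Finset.range k, (f j - c)
  -- the partial sums of `f - c` vanish after one period, hence are periodic and bounded
  have hg : Periodic g N := by
    intro k
    induction k with
    | zero =>
      simp only [g, zero_add, Finset.sum_range_zero, Finset.sum_sub_distrib,
        Finset.sum_const, Finset.card_range, nsmul_eq_mul, c]
      field_simp
      ring
    | succ k ih => simp only [g, Nat.add_right_comm k 1 N, Finset.sum_range_succ, ih, hf k] at ih ⊢
  obtain ⟨M, hM⟩ := (hg.comp (‖·‖)).finite_range_nat hN |>.bddAbove
  have hdecomp : ∀ᶠ k : ℕ in atTop,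
      c + (k : ℝ)⁻¹ * g k = (k : ℝ)⁻¹ * ∑ j ∈ Finset.range k, f j := by
    filter_upwards [eventually_ne_atTop 0] with k hk
    simp only [g, Finset.sum_sub_distrib, Finset.sum_const, Finset.card_range, nsmul_eq_mul]
    field_simp
    ring
  refine Tendsto.congr' hdecomp ?_
  simpa using tendsto_const_nhds.add <| tendsto_inv_atTop_nhds_zero_nat.zero_mul_isBoundedUnder_le
    (isBoundedUnder_of ⟨M, fun k => hM ⟨k, rfl⟩⟩)

lemma tendsto_measureReal_lt_of_concentration {Ω : ℕ → Type*} [∀ k, MeasurableSpace (Ω k)]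
    {μ : ∀ k, Measure (Ω k)} [∀ k, IsProbabilityMeasure (μ k)] {S : ∀ k, Ω k → ℝ} {m : ℕ → ℝ}
    {c : ℝ} (hm : Tendsto m atTop (𝓝 c))
    (hS : ∀ δ > 0, Tendsto (fun k => (μ k).real {ω | δ ≤ |S k ω - m k|}) atTop (𝓝 0)) :
    (∀ α < c, Tendsto (fun k => (μ k).real {ω | S k ω < α}) atTop (𝓝 0)) ∧
      (∀ α > c, Tendsto (fun k => (μ k).real {ω | S k ω < α}) atTop (𝓝 1)) := by
  constructor
  · intro α hα
    have hδ : 0 < (c - α) / 2 := by linarith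
    refine squeeze_zero' (.of_forall fun k => measureReal_nonneg) ?_ (hS _ hδ)
    filter_upwards [hm.eventually (eventually_gt_nhds (by linarith : α + (c - α) / 2 < c))]
      with k hk
    refine measureReal_mono fun ω (hω : S k ω < α) => ?_
    show _ ≤ |S k ω - m k|
    rw [abs_sub_comm]
    exact le_abs.2 (.inl (by linarith))
  · intro α hα
    have hδ : 0 < (α - c) / 2 := by linarith
    refine tendsto_of_tendsto_of_tendsto_of_le_of_le' (by simpa using (hS _ hδ).const_sub 1)
      tendsto_const_nhds ?_ (.of_forall fun k => measureReal_le_one)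
    filter_upwards [hm.eventually (eventually_lt_nhds (by linarith : c < α - (α - c) / 2))]
      with k hk
    have hcompl : {ω | S k ω < α}ᶜ ⊆ {ω | (α - c) / 2 ≤ |S k ω - m k|} := fun ω hω => by
      simp only [Set.mem_compl_iff, Set.mem_ofPred_eq, not_lt] at hω
      exact le_abs.2 (.inl (by linarith : (α - c) / 2 ≤ S k ω - m k))
    have := (measureReal_union_le (μ := μ k) {ω | S k ω < α} {ω | S k ω < α}ᶜ)
    rw [Set.union_compl_self, probReal_univ] at this
    linarith [measureReal_mono (μ := μ k) hcompl]

lemma Function.Periodic.periodic_nat_sample {C : ℝ → ℝ} {T : ℝ} (hC : Periodic C T)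
    {q : ℝ} (hq : q ≠ 0) {n N : ℕ} (hN : (N : ℝ) = q * n) :
    Periodic (fun i : ℕ => C (i * T / q)) N := fun i => by
  dsimp only
  rw [show ((i + N : ℕ) : ℝ) * T / q = i * T / q + n * T by push_cast; rw [hN]; field_simp]
  exact hC.nat_mul n _

lemma gpdf_pos {v : ℝ} (hv : 0 < v) (x : ℝ) : 0 < gpdf v x := by
  unfold gpdf
  have : 0 < 2 * Real.pi * v := by positivity
  positivity

noncomputable def letterLaw (a b : ℝ) : Measure (ℝ × ℝ) :=
  (gaussianReal 0 a.toNNReal).prod (gaussianReal 0 b.toNNReal)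

instance (a b : ℝ) : IsProbabilityMeasure (letterLaw a b) := by
  unfold letterLaw; infer_instance

noncomputable def letterInfoDens (a b : ℝ) (q : ℝ × ℝ) : ℝ :=
  Real.logb 2 (gpdf b q.2 / gpdf (a + b) (q.1 + q.2))

lemma letterInfoDens_eq {a b : ℝ} (ha : 0 ≤ a) (hb : 0 < b) (q : ℝ × ℝ) :
    letterInfoDens a b q =
      (Real.log 2)⁻¹ * (Real.log √(2 * Real.pi * (a + b)) - Real.log √(2 * Real.pi * b)
        - (2 * b)⁻¹ * q.2 ^ 2 + (2 * (a + b))⁻¹ * (q.1 + q.2) ^ 2) := by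
  have hab : 0 < a + b := by linarith
  rw [letterInfoDens, Real.logb, Real.log_div (gpdf_pos hb _).ne' (gpdf_pos hab _).ne', gpdf, gpdf,
    Real.log_mul (by positivity) (Real.exp_ne_zero _),
    Real.log_mul (by positivity) (Real.exp_ne_zero _),
    Real.log_inv, Real.log_inv, Real.log_exp, Real.log_exp]
  ring

lemma memLp_two_letterInfoDens {a b : ℝ} (ha : 0 ≤ a) (hb : 0 < b) :
    MemLp (letterInfoDens a b) 2 (letterLaw a b) := by
  have hx : MemLp (fun q : ℝ × ℝ => q.1) 4 (letterLaw a b) :=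
    (memLp_id_gaussianReal 4).comp_measurePreserving measurePreserving_fst
  have hw : MemLp (fun q : ℝ × ℝ => q.2) 4 (letterLaw a b) :=
    (memLp_id_gaussianReal 4).comp_measurePreserving measurePreserving_snd
  rw [funext (letterInfoDens_eq ha hb)]
  exact ((((memLp_const _).sub ((memLp_two_sq_of_memLp_four hw).const_mul _)).add
    ((memLp_two_sq_of_memLp_four (hx.add hw)).const_mul _)).const_mul _)

lemma infoDensCDF_eq_measureReal_pi (sX sW : ℕ → ℝ) (k : ℕ) (α : ℝ) :
    infoDensCDF sX sW k α =
      (Measure.pi fun i : Fin k => letterLaw (sX (i + 1)) (sW (i + 1))).real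
        {ω | (k : ℝ)⁻¹ * ∑ i : Fin k, letterInfoDens (sX (i + 1)) (sW (i + 1)) (ω i) < α} := by
  rw [infoDensCDF, inputNoiseMeasure, ← (measurePreserving_arrowProdEquivProdArrow ℝ ℝ (Fin k)
    _ _).map_eq, MeasurableEquiv.map_apply, Measure.real]
  simp only [infoDensRate, one_div]
  rfl

lemma tendsto_infoDensCDF_of_periodic {sX sW : ℕ → ℝ} (hsX : ∀ i, 0 ≤ sX i) (hsW : ∀ i, 0 < sW i)
    {N : ℕ} (hN : 0 < N) (hX : Periodic sX N) (hW : Periodic sW N) :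
    ∃ c : ℝ, (∀ α < c, Tendsto (fun k => infoDensCDF sX sW k α) atTop (𝓝 0)) ∧
      (∀ α > c, Tendsto (fun k => infoDensCDF sX sW k α) atTop (𝓝 1)) := by
  set L : ℕ → Measure (ℝ × ℝ) := fun j => letterLaw (sX (j + 1)) (sW (j + 1))
  set Y : ℕ → ℝ × ℝ → ℝ := fun j => letterInfoDens (sX (j + 1)) (sW (j + 1))
  have hY : ∀ j, MemLp (Y j) 2 (L j) := fun j => memLp_two_letterInfoDens (hsX _) (hsW _)
  have hper (F : ℝ → ℝ → ℝ) : Periodic (fun j => F (sX (j + 1)) (sW (j + 1))) N :=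
    fun j => by simp only [Nat.add_right_comm j N 1, hX (j + 1), hW (j + 1)]
  set mean : ℕ → ℝ := fun j => ∫ q, Y j q ∂L j
  obtain ⟨B, hB⟩ := ((hper fun a b => Var[letterInfoDens a b; letterLaw a b]).finite_range_nat
    hN).bddAbove
  refine ⟨(N : ℝ)⁻¹ * ∑ j ∈ Finset.range N, mean j, ?_⟩
  simp only [infoDensCDF_eq_measureReal_pi]
  refine tendsto_measureReal_lt_of_concentration
    ((hper fun a b => ∫ q, letterInfoDens a b q ∂letterLaw a b).tendsto_avg_sum_range hN)
    fun δ hδ => ?_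
  refine squeeze_zero (fun k => measureReal_nonneg) (fun k => ?_)
    (by simpa using (tendsto_const_nhds (x := B / δ ^ 2)).mul tendsto_inv_atTop_nhds_zero_nat)
  have h := measureReal_abs_avg_sub_ge_le_pi (μ := fun i : Fin k => L i) (X := fun i => Y i)
    (fun i => hY i) (fun i => hB ⟨i, rfl⟩) hδ
  rw [Fintype.card_fin, Fin.sum_univ_eq_sum_range (fun j => ∫ q, Y j q ∂L j)] at h
  convert h using 1
  field_simp

theorem stmt12_general (C : ℝ → ℝ) (T_c : ℝ)
    (hC_pos : ∀ t, 0 < C t)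
    (hC_per : ∀ t, C (t + T_c) = C t)
    (p : ℕ) (hp : 0 < p) (ε : ℝ) (hε0 : 0 < ε) (n : ℕ) (hn : 0 < n)
    (σ2 : ℕ → ℝ)
    (hσ2 : ∀ i : ℕ, σ2 i = C ((i : ℝ) * T_c / ((p : ℝ) + (⌊(n : ℝ) * ε⌋ : ℝ) / (n : ℝ))))
    (N : ℕ) (hN : N = p * n + (⌊(n : ℝ) * ε⌋).toNat)
    (Δ : ℝ)
    (sX : ℕ → ℝ) (hsX : ∀ i, sX i = max (Δ - σ2 i) 0) :
    ∀ φ : ℕ → ℕ, StrictMono φ → ∃ c : ℝ,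
      (∀ α < c, Tendsto (fun l => infoDensCDF sX σ2 (φ l) α) atTop (nhds 0)) ∧
      (∀ α > c, Tendsto (fun l => infoDensCDF sX σ2 (φ l) α) atTop (nhds 1)) := by
  intro φ hφ
  have hnR : (0 : ℝ) < n := Nat.cast_pos.2 hn
  have hfloor : (0 : ℤ) ≤ ⌊(n : ℝ) * ε⌋ := Int.floor_nonneg.2 (by positivity)
  have hNR : (N : ℝ) = ((p : ℝ) + (⌊(n : ℝ) * ε⌋ : ℝ) / n) * n := by
    have : ((⌊(n : ℝ) * ε⌋.toNat : ℕ) : ℝ) = ⌊(n : ℝ) * ε⌋ := by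
      exact_mod_cast Int.toNat_of_nonneg hfloor
    rw [hN, Nat.cast_add, Nat.cast_mul, this]
    field_simp
  have hσper : Periodic σ2 N := by
    rw [funext hσ2]
    exact Periodic.periodic_nat_sample hC_per (by positivity) hNR
  have hsXper : Periodic sX N := fun i => by rw [hsX, hsX, hσper]
  obtain ⟨c, hbelow, habove⟩ := tendsto_infoDensCDF_of_periodic
    (fun i => (hsX i).symm ▸ le_max_right _ _) (fun i => hσ2 i ▸ hC_pos _)
    (hN ▸ Nat.add_pos_left (Nat.mul_pos hp hn) _) hsXper hσper
  exact ⟨c, fun α hα => (hbelow α hα).comp hφ.tendsto_atTop,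
    fun α hα => (habove α hα).comp hφ.tendsto_atTop⟩

/-- Fix `n` and consider the synchronously sampled noise
`σ_n²[i] = C(i·T_c/(p+ε_n))` (`ε_n = ⌊n·ε⌋/n`), periodic with period `N_n = p·n + ⌊n·ε⌋`.
Let the input be the capacity-achieving one: the memoryless zero-mean Gaussian input with
water-filling variances `σ_{X_n}²[i] = (Δ − σ_n²[i])⁺`, `Δ` solving the water-filling equation
for power `P`.  Then every subsequence (in the blocklength `k`) of the mutual information
density rates `Z'_{k,n}` converges in distribution, as `k → ∞`, to a finite deterministic
scalar `c` (i.e. the CDFs tend to `0` below `c` and to `1` above `c`). -/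
theorem stmt12 (C : ℝ → ℝ) (T_c : ℝ) (hT : 0 < T_c)
    (hC_cont : Continuous C) (hC_pos : ∀ t, 0 < C t)
    (hC_per : ∀ t, C (t + T_c) = C t)
    (p : ℕ) (hp : 0 < p) (ε : ℝ) (hε0 : 0 < ε) (hε1 : ε < 1) (hirr : Irrational ε)
    (P : ℝ) (hP : 0 < P) (n : ℕ) (hn : 0 < n)
    (σ2 : ℕ → ℝ)
    (hσ2 : ∀ i : ℕ, σ2 i = C ((i : ℝ) * T_c / ((p : ℝ) + (⌊(n : ℝ) * ε⌋ : ℝ) / (n : ℝ))))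
    (N : ℕ) (hN : N = p * n + (⌊(n : ℝ) * ε⌋).toNat)
    (Δ : ℝ) (hΔpos : 0 < Δ)
    (hΔ : (1 / (N : ℝ)) * ∑ i ∈ Finset.range N, max (Δ - σ2 i) 0 = P)
    (sX : ℕ → ℝ) (hsX : ∀ i, sX i = max (Δ - σ2 i) 0) :
    ∀ φ : ℕ → ℕ, StrictMono φ → ∃ c : ℝ,
      (∀ α < c, Tendsto (fun l => infoDensCDF sX σ2 (φ l) α) atTop (nhds 0)) ∧
      (∀ α > c, Tendsto (fun l => infoDensCDF sX σ2 (φ l) α) atTop (nhds 1)) :=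
  stmt12_general C T_c hC_pos hC_per p hp ε hε0 n hn σ2 hσ2 N hN Δ sX hsX
end

section
/- Let A and B be independent real-valued zero-mean Gaussian random variables with variances σ_A² and σ_B², and let β ∈ ℝ. Then the random variable V = (1/2)·A·B + (1/2)·β has characteristic function Φ_V(α) = e^{i·β·α/2} / √( α²·σ_A²·σ_B²/4 + 1 ) for every α ∈ ℝ. -/
open MeasureTheory ProbabilityTheory
open scoped NNReal
open Complex Real

/-! Integrating out `B` first, the characteristic function of the centred Gaussian `B` at `t·A`
leaves `E[exp(-σ_B² t² A² / 2)]`, a Gaussian integral in `A` equal to `(σ_A² σ_B² t² + 1)^{-1/2}`.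
With `t = α/2`, the shift `β/2` only contributes the phase `e^{iβα/2}`. -/

lemma integral_exp_neg_mul_sq_gaussianReal (v : ℝ≥0) {c : ℝ} (hc : 0 ≤ c) :
    ∫ x, rexp (-(c * x ^ 2)) ∂gaussianReal 0 v = (√(2 * v * c + 1))⁻¹ := by
  rcases eq_or_ne v 0 with rfl | hv
  · simp [gaussianReal_zero_var]
  have hdensity : ∀ x, gaussianPDFReal 0 v x • rexp (-(c * x ^ 2))
      = (√(2 * π * v))⁻¹ * rexp (-(c + (2 * (v : ℝ))⁻¹) * x ^ 2) := by
    intro x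
    rw [gaussianPDFReal, smul_eq_mul, mul_assoc, ← Real.exp_add]
    congr 2
    field_simp
    ring
  simp_rw [integral_gaussianReal_eq_integral_smul hv, hdensity, integral_const_mul,
    integral_gaussian]
  rw [← Real.sqrt_inv, ← Real.sqrt_mul (by positivity), ← Real.sqrt_inv]
  congr 1
  field_simp

lemma integral_cexp_mul_mul_gaussianReal_prod (v₁ v₂ : ℝ≥0) (t : ℝ) :
    ∫ p, cexp (t * (p.1 * p.2) * I) ∂(gaussianReal 0 v₁).prod (gaussianReal 0 v₂)
      = (√(v₁ * v₂ * t ^ 2 + 1) : ℂ)⁻¹ := by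
  have hint : Integrable (fun p : ℝ × ℝ ↦ cexp (t * (p.1 * p.2) * I))
      ((gaussianReal 0 v₁).prod (gaussianReal 0 v₂)) := by
    refine (integrable_const (1 : ℝ)).mono' (by fun_prop) (ae_of_all _ fun p ↦ ?_)
    rw [← ofReal_mul, ← ofReal_mul, norm_exp_ofReal_mul_I]
  have hinner : ∀ x : ℝ, ∫ y, cexp (t * (x * y) * I) ∂gaussianReal 0 v₂
      = (rexp (-(v₂ * t ^ 2 / 2 * x ^ 2)) : ℂ) := by
    intro x
    calc ∫ y, cexp (t * (x * y) * I) ∂gaussianReal 0 v₂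
        = charFun (gaussianReal 0 v₂) (t * x) := by
          simp_rw [charFun_apply_real, ofReal_mul, mul_assoc]
      _ = _ := by rw [charFun_gaussianReal]; push_cast; ring_nf
  rw [integral_prod _ hint]
  have hc : 0 ≤ (v₂ : ℝ) * t ^ 2 / 2 := by positivity
  simp_rw [hinner, integral_complex_ofReal, integral_exp_neg_mul_sq_gaussianReal v₁ hc]
  push_cast
  ring_nf

lemma integral_cexp_mul_mul_of_indepFun {Ω : Type*} [MeasurableSpace Ω] {μ : Measure Ω}
    {A B : Ω → ℝ} {v₁ v₂ : ℝ≥0} (hA : μ.map A = gaussianReal 0 v₁)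
    (hB : μ.map B = gaussianReal 0 v₂) (hAB : IndepFun A B μ) (t : ℝ) :
    ∫ ω, cexp (t * (A ω * B ω) * I) ∂μ = (√(v₁ * v₂ * t ^ 2 + 1) : ℂ)⁻¹ := by
  have hmA : AEMeasurable A μ := .of_map_ne_zero (by simp [hA, NeZero.ne])
  have hmB : AEMeasurable B μ := .of_map_ne_zero (by simp [hB, NeZero.ne])
  have hlaw : μ.map (fun ω ↦ (A ω, B ω)) = (gaussianReal 0 v₁).prod (gaussianReal 0 v₂) := by
    rw [← hA, ← hB]
    exact (indepFun_iff_map_prod_eq_prod_map_map' hmA hmB (hA ▸ inferInstance)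
      (hB ▸ inferInstance)).mp hAB
  rw [← integral_cexp_mul_mul_gaussianReal_prod, ← hlaw,
    integral_map (hmA.prodMk hmB) (by fun_prop)]

theorem stmt16_general {Ω : Type*} [MeasureSpace Ω]
    (A B : Ω → ℝ)
    (σA2 σB2 : ℝ) (hA2 : 0 ≤ σA2) (hB2 : 0 ≤ σB2)
    (hA : Measure.map A ℙ = gaussianReal 0 σA2.toNNReal)
    (hB : Measure.map B ℙ = gaussianReal 0 σB2.toNNReal)
    (hAB : IndepFun A B ℙ)
    (β : ℝ) :
    ∀ α : ℝ,
      (∫ ω, Complex.exp (Complex.I * (α * ((1 / 2) * A ω * B ω + (1 / 2) * β) : ℝ)) ∂ℙ) =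
        Complex.exp (Complex.I * ((β * α / 2 : ℝ))) /
          (Real.sqrt (α ^ 2 * σA2 * σB2 / 4 + 1) : ℝ) := by
  intro α
  have hsplit : ∀ ω, I * ((α * ((1 / 2) * A ω * B ω + (1 / 2) * β) : ℝ) : ℂ)
      = I * (β * α / 2 : ℝ) + (α / 2 : ℝ) * (A ω * B ω) * I := by
    intro ω
    push_cast
    ring
  simp_rw [hsplit, Complex.exp_add, integral_const_mul,
    integral_cexp_mul_mul_of_indepFun hA hB hAB, Real.coe_toNNReal _ hA2,
    Real.coe_toNNReal _ hB2, div_eq_mul_inv]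
  ring_nf

/-- If `A` and `B` are independent real zero-mean Gaussian random variables
with variances `σ_A²` and `σ_B²`, and `β ∈ ℝ`, then `V = (1/2)·A·B + (1/2)·β` has
characteristic function `Φ_V(α) = e^{i·β·α/2} / √(α²·σ_A²·σ_B²/4 + 1)` for every `α ∈ ℝ`. -/
theorem stmt16 {Ω : Type*} [MeasureSpace Ω] [IsProbabilityMeasure (ℙ : Measure Ω)]
    (A B : Ω → ℝ) (hmA : Measurable A) (hmB : Measurable B)
    (σA2 σB2 : ℝ) (hA2 : 0 ≤ σA2) (hB2 : 0 ≤ σB2)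
    (hA : Measure.map A ℙ = gaussianReal 0 σA2.toNNReal)
    (hB : Measure.map B ℙ = gaussianReal 0 σB2.toNNReal)
    (hAB : IndepFun A B ℙ)
    (β : ℝ) :
    ∀ α : ℝ,
      (∫ ω, Complex.exp (Complex.I * (α * ((1 / 2) * A ω * B ω + (1 / 2) * β) : ℝ)) ∂ℙ) =
        Complex.exp (Complex.I * ((β * α / 2 : ℝ))) /
          (Real.sqrt (α ^ 2 * σA2 * σB2 / 4 + 1) : ℝ) :=
  stmt16_general A B σA2 σB2 hA2 hB2 hA hB hAB β
end
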